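/- Let |ψ⟩ = α|+_L⟩ + β|−_L⟩ be a state in a Δ-shifted gnu codespace with t ≤ Δ and gn + Δ ≤ N − t, where |±_L⟩ = (|0_L⟩ ± |1_L⟩)/√2. Then the partial trace over any t qubits satisfies Tr_t(|ψ⟩⟨ψ|) = Σ_{s=0}^{t} C(t,s) |ψ_s⟩⟨ψ_s|, where |ψ_s⟩ = α|+_s⟩ + β|−_s⟩ and |±_s⟩ = Σ_{j=0}^{n} (±1)^j b_{j,s} |D^{N−t}_{gj+Δ−s}⟩ with b_{j,s} = √(C(n,j) C(N−t, gj+Δ−s)) / √(2^n C(N, gj+Δ)). -/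

import Mathlib

/-- Hamming weight of a bit string of length `N`. -/
def hamWeight {N : ℕ} (x : Fin N → Bool) : ℕ :=
  (Finset.univ.filter (fun i => x i = true)).card

/-- Unnormalized Dicke state `|H^N_w⟩`. -/
noncomputable def dickeH (N w : ℕ) : (Fin N → Bool) → ℂ :=
  fun x => if hamWeight x = w then 1 else 0

/-- Normalized Dicke state `|D^N_w⟩`. -/
noncomputable def dickeD (N w : ℕ) : (Fin N → Bool) → ℂ :=
  fun x => ((Real.sqrt (N.choose w) : ℂ))⁻¹ * dickeH N w x

/-- Outer product `|f⟩⟨g|`. -/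
noncomputable def outer {N : ℕ} (f g : (Fin N → Bool) → ℂ) :
    Matrix (Fin N → Bool) (Fin N → Bool) ℂ :=
  fun x y => f x * (starRingEnd ℂ) (g y)

/-- Partial trace over the first `t` qubits. -/
noncomputable def ptrace {t m : ℕ}
    (M : Matrix (Fin (t + m) → Bool) (Fin (t + m) → Bool) ℂ) :
    Matrix (Fin m → Bool) (Fin m → Bool) ℂ :=
  fun y y' => ∑ x : Fin t → Bool, M (Fin.append x y) (Fin.append x y')

/-- `Δ`-shifted gnu logical codeword `|0_L⟩` on `N = t + m` qubits. -/
noncomputable def sgnuZero (t m g n Δ : ℕ) : (Fin (t + m) → Bool) → ℂ :=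
  ∑ j ∈ (Finset.range (n + 1)).filter (fun j => Even j),
    ((Real.sqrt (2 ^ (n - 1 : ℤ) : ℝ)⁻¹ * Real.sqrt (n.choose j) : ℝ) : ℂ) •
      dickeD (t + m) (g * j + Δ)

/-- `Δ`-shifted gnu logical codeword `|1_L⟩` on `N = t + m` qubits. -/
noncomputable def sgnuOne (t m g n Δ : ℕ) : (Fin (t + m) → Bool) → ℂ :=
  ∑ j ∈ (Finset.range (n + 1)).filter (fun j => Odd j),
    ((Real.sqrt (2 ^ (n - 1 : ℤ) : ℝ)⁻¹ * Real.sqrt (n.choose j) : ℝ) : ℂ) •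
      dickeD (t + m) (g * j + Δ)

/-- The coefficient `b_{j,s} = √(C(n,j) C(N−t, gj+Δ−s)) / √(2^n C(N, gj+Δ))`. -/
noncomputable def bCoeff (t m g n Δ j s : ℕ) : ℝ :=
  Real.sqrt ((n.choose j : ℝ) * ((m.choose (g * j + Δ - s)) : ℝ)) /
    Real.sqrt ((2 ^ n : ℝ) * (((t + m).choose (g * j + Δ)) : ℝ))

/-- The post-deletion states `|±_s⟩ = Σ_j (±1)^j b_{j,s} |D^{N−t}_{gj+Δ−s}⟩`. -/
noncomputable def plusS (t m g n Δ s : ℕ) : (Fin m → Bool) → ℂ :=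
  ∑ j ∈ Finset.range (n + 1),
    ((bCoeff t m g n Δ j s : ℝ) : ℂ) • dickeD m (g * j + Δ - s)

noncomputable def minusS (t m g n Δ s : ℕ) : (Fin m → Bool) → ℂ :=
  ∑ j ∈ Finset.range (n + 1),
    ((-1 : ℂ) ^ j * ((bCoeff t m g n Δ j s : ℝ) : ℂ)) • dickeD m (g * j + Δ - s)

/-!
A superposition of Dicke states is a function of the Hamming weight alone. Splitting a string as
`x ++ y` with `x` on the traced qubits, the weight is additive, and the `C(t, s)` strings `x` of
weight `s` all contribute the same term, namely the outer product of the two reduced functions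
`y ↦ F (s + |y|)`. For `ψ = Σ_j γ_j |H^N_{gj+Δ}⟩` that reduced function is again a
superposition `Σ_j γ_j |H^{N-t}_{gj+Δ-s}⟩`, since `t ≤ Δ` keeps the subtraction `gj + Δ - s` from
truncating; `gn + Δ ≤ N - t` keeps these Dicke states nonzero, so that the normalisation
`b_{j,s}` can absorb the factor `√C(N-t, gj+Δ-s)`.
-/

open Finset

lemma hamWeight_append {t m : ℕ} (x : Fin t → Bool) (y : Fin m → Bool) :
    hamWeight (Fin.append x y) = hamWeight x + hamWeight y := by
  simp only [hamWeight, card_filter, Fin.sum_univ_add, Fin.append_left, Fin.append_right]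

lemma hamWeight_le {t : ℕ} (x : Fin t → Bool) : hamWeight x ≤ t :=
  (card_filter_le univ fun i => x i = true).trans_eq (card_fin t)

lemma card_filter_hamWeight_eq (t s : ℕ) :
    #{x : Fin t → Bool | hamWeight x = s} = t.choose s := by
  trans #(powersetCard s (univ : Finset (Fin t)))
  · refine card_bij' (fun x _ => ({i | x i = true} : Finset (Fin t)))
      (fun S _ i => decide (i ∈ S)) (fun x hx => ?_) (fun S hS => ?_) (fun x _ => ?_)
      (fun S _ => ?_)
    · simpa [mem_powersetCard, hamWeight] using (mem_filter.mp hx).2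
    · rw [mem_filter, hamWeight]
      simpa using hS
    · funext i; simp
    · ext i; simp
  · simp

lemma sum_comp_hamWeight {M : Type*} [AddCommMonoid M] (t : ℕ) (f : ℕ → M) :
    ∑ x : Fin t → Bool, f (hamWeight x) = ∑ s ∈ range (t + 1), t.choose s • f s := by
  rw [← sum_fiberwise_of_maps_to (g := hamWeight) (t := range (t + 1))
    fun x _ => mem_range_succ_iff.mpr (hamWeight_le x)]
  refine sum_congr rfl fun s _ => ?_
  rw [sum_congr rfl fun x hx => congrArg f (mem_filter.mp hx).2, sum_const,
    card_filter_hamWeight_eq]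

lemma ptrace_outer_comp_hamWeight {t m : ℕ} (F G : ℕ → ℂ) :
    ptrace (t := t) (m := m) (outer (fun x => F (hamWeight x)) (fun x => G (hamWeight x))) =
      ∑ s ∈ range (t + 1), (t.choose s : ℂ) •
        outer (fun y => F (s + hamWeight y)) (fun y => G (s + hamWeight y)) := by
  funext y y'
  simp only [ptrace, outer, hamWeight_append, Matrix.sum_apply, Matrix.smul_apply, smul_eq_mul]
  rw [sum_comp_hamWeight t fun s => F (s + hamWeight y) * starRingEnd ℂ (G (s + hamWeight y'))]
  simp only [nsmul_eq_mul]

lemma sum_smul_dickeH_sub_eq {ι : Type*} (N s : ℕ) (J : Finset ι) (γ : ι → ℂ) (u : ι → ℕ)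
    (hu : ∀ j ∈ J, s ≤ u j) :
    ∑ j ∈ J, γ j • dickeH N (u j - s) =
      fun x => ∑ j ∈ J, if s + hamWeight x = u j then γ j else 0 := by
  funext x
  simp only [Finset.sum_apply, Pi.smul_apply, dickeH, smul_eq_mul, mul_ite, mul_one, mul_zero]
  refine sum_congr rfl fun j hj => if_congr ?_ rfl rfl
  have := hu j hj
  omega

lemma ptrace_outer_sum_smul_dickeH {ι κ : Type*} {t m : ℕ} (I : Finset ι) (J : Finset κ)
    (γ : ι → ℂ) (δ : κ → ℂ) (u : ι → ℕ) (v : κ → ℕ)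
    (hu : ∀ i ∈ I, t ≤ u i) (hv : ∀ j ∈ J, t ≤ v j) :
    ptrace (outer (∑ i ∈ I, γ i • dickeH (t + m) (u i)) (∑ j ∈ J, δ j • dickeH (t + m) (v j))) =
      ∑ s ∈ range (t + 1), (t.choose s : ℂ) •
        outer (∑ i ∈ I, γ i • dickeH m (u i - s)) (∑ j ∈ J, δ j • dickeH m (v j - s)) := by
  have hψ := sum_smul_dickeH_sub_eq (t + m) 0 I γ u fun _ _ => Nat.zero_le _
  have hφ := sum_smul_dickeH_sub_eq (t + m) 0 J δ v fun _ _ => Nat.zero_le _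
  simp only [Nat.sub_zero, zero_add] at hψ hφ
  rw [hψ, hφ]
  refine (ptrace_outer_comp_hamWeight (fun k => ∑ i ∈ I, if k = u i then γ i else 0)
    (fun k => ∑ j ∈ J, if k = v j then δ j else 0)).trans ?_
  refine sum_congr rfl fun s hs => ?_
  have hst := mem_range_succ_iff.mp hs
  rw [sum_smul_dickeH_sub_eq m s I γ u fun i hi => hst.trans (hu i hi),
    sum_smul_dickeH_sub_eq m s J δ v fun j hj => hst.trans (hv j hj)]

lemma sum_filter_even_add_sum_filter_odd {M : Type*} [AddCommMonoid M] (J : Finset ℕ)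
    (f : ℕ → M) :
    ∑ j ∈ J with Even j, f j + ∑ j ∈ J with Odd j, f j = ∑ j ∈ J, f j := by
  simp only [← Nat.not_even_iff_odd, sum_filter_add_sum_filter_not]

lemma sum_filter_even_sub_sum_filter_odd {R M : Type*} [Ring R] [AddCommGroup M] [Module R M]
    (J : Finset ℕ) (f : ℕ → M) :
    ∑ j ∈ J with Even j, f j - ∑ j ∈ J with Odd j, f j = ∑ j ∈ J, ((-1 : R) ^ j) • f j := by
  rw [sub_eq_add_neg, ← sum_neg_distrib, ← sum_filter_even_add_sum_filter_odd J]
  congr 1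
  · exact sum_congr rfl fun j hj => by rw [(mem_filter.mp hj).2.neg_one_pow, one_smul]
  · exact sum_congr rfl fun j hj => by rw [(mem_filter.mp hj).2.neg_one_pow, neg_one_smul]

lemma dickeD_eq_smul_dickeH (N w : ℕ) :
    dickeD N w = ((Real.sqrt (N.choose w) : ℂ))⁻¹ • dickeH N w := rfl

noncomputable def shiftedGnuAmplitude (t m g n Δ : ℕ) (α β : ℂ) (j : ℕ) : ℂ :=
  (α + (-1 : ℂ) ^ j * β) *
    ((Real.sqrt (n.choose j) / Real.sqrt ((2 ^ n : ℝ) * ((t + m).choose (g * j + Δ) : ℝ)) : ℝ) : ℂ)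

lemma sqrt_two_mul_sqrt_two_zpow_sub_one (n : ℕ) :
    Real.sqrt 2 * Real.sqrt (2 ^ ((n : ℤ) - 1)) = Real.sqrt (2 ^ n) := by
  rw [← Real.sqrt_mul zero_le_two, zpow_sub_one₀ two_ne_zero, zpow_natCast]
  congr 1
  field_simp

lemma shiftedGnu_state_eq_sum (t m g n Δ : ℕ) (α β : ℂ) :
    α • ((((Real.sqrt 2 : ℝ) : ℂ))⁻¹ • (sgnuZero t m g n Δ + sgnuOne t m g n Δ)) +
    β • ((((Real.sqrt 2 : ℝ) : ℂ))⁻¹ • (sgnuZero t m g n Δ - sgnuOne t m g n Δ)) =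
      ∑ j ∈ range (n + 1), shiftedGnuAmplitude t m g n Δ α β j • dickeH (t + m) (g * j + Δ) := by
  rw [sgnuZero, sgnuOne, sum_filter_even_add_sum_filter_odd,
    sum_filter_even_sub_sum_filter_odd (R := ℂ), smul_sum, smul_sum, smul_sum, smul_sum,
    ← sum_add_distrib]
  refine sum_congr rfl fun j _ => ?_
  rw [dickeD_eq_smul_dickeH, shiftedGnuAmplitude, Real.sqrt_inv, Real.sqrt_mul (by positivity),
    ← sqrt_two_mul_sqrt_two_zpow_sub_one]
  simp only [smul_smul, ← add_smul]
  congr 1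
  push_cast
  ring

lemma shiftedGnu_reduced_state_eq_sum (t m g n Δ s : ℕ) (α β : ℂ) (hm : g * n + Δ ≤ m) :
    α • plusS t m g n Δ s + β • minusS t m g n Δ s =
      ∑ j ∈ range (n + 1), shiftedGnuAmplitude t m g n Δ α β j • dickeH m (g * j + Δ - s) := by
  rw [plusS, minusS, smul_sum, smul_sum, ← sum_add_distrib]
  refine sum_congr rfl fun j hj => ?_
  have hw : g * j + Δ - s ≤ m := by
    have := Nat.mul_le_mul_left g (mem_range_succ_iff.mp hj)
    omega
  have hpos : (0 : ℝ) < m.choose (g * j + Δ - s) := mod_cast Nat.choose_pos hw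
  rw [dickeD_eq_smul_dickeH, shiftedGnuAmplitude, bCoeff, Real.sqrt_mul (by positivity)]
  simp only [smul_smul, ← add_smul]
  congr 1
  have : (Real.sqrt (m.choose (g * j + Δ - s)) : ℂ) ≠ 0 := mod_cast (Real.sqrt_pos.mpr hpos).ne'
  push_cast
  field_simp

/-- for `|ψ⟩ = α|+_L⟩ + β|−_L⟩` in the `Δ`-shifted gnu codespace
with `t ≤ Δ` and `gn + Δ ≤ N − t` (here `N = t + m`),
`Tr_t(|ψ⟩⟨ψ|) = Σ_{s=0}^{t} C(t,s) |ψ_s⟩⟨ψ_s|` with `|ψ_s⟩ = α|+_s⟩ + β|−_s⟩`. -/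
theorem ptrace_shifted_gnu_state (t m g n Δ : ℕ) (α β : ℂ)
    (htΔ : t ≤ Δ) (hm : g * n + Δ ≤ m) :
    ptrace (outer
        (α • ((((Real.sqrt 2 : ℝ) : ℂ))⁻¹ • (sgnuZero t m g n Δ + sgnuOne t m g n Δ)) +
         β • ((((Real.sqrt 2 : ℝ) : ℂ))⁻¹ • (sgnuZero t m g n Δ - sgnuOne t m g n Δ)))
        (α • ((((Real.sqrt 2 : ℝ) : ℂ))⁻¹ • (sgnuZero t m g n Δ + sgnuOne t m g n Δ)) +
         β • ((((Real.sqrt 2 : ℝ) : ℂ))⁻¹ • (sgnuZero t m g n Δ - sgnuOne t m g n Δ)))) =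
      ∑ s ∈ Finset.range (t + 1),
        (t.choose s : ℂ) •
          outer (α • plusS t m g n Δ s + β • minusS t m g n Δ s)
                (α • plusS t m g n Δ s + β • minusS t m g n Δ s) := by
  have hweight : ∀ j ∈ range (n + 1), t ≤ g * j + Δ := fun j _ => htΔ.trans (Nat.le_add_left _ _)
  rw [shiftedGnu_state_eq_sum, ptrace_outer_sum_smul_dickeH _ _ _ _ _ _ hweight hweight]
  simp only [shiftedGnu_reduced_state_eq_sum t m g n Δ _ α β hm]
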